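/- Invariance of the signed 1-Wasserstein distance under reduction (Proposition 6.2(3)). For all finite n-dimensional signed barcodes B and C, d̂_{W¹}(B, C) = d̂_{W¹}(B̄, C̄), where B̄ and C̄ denote the reductions of B and C. -/

import Mathlib

set_option linter.unusedVariables false
set_option maxHeartbeats 800000

open scoped Classical ENNReal

noncomputable section

/-- Points of `R^n`. The metric on `Fin n → ℝ` is the sup-metric, so `dist` is `‖·‖_∞`. -/
abbrev Pt (n : ℕ) := Fin n → ℝ

/-- An `n`-parameter persistence module: a functor from the poset `R^n`
to finite-dimensional `k`-vector spaces. -/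
structure PersMod (k : Type) [Field k] (n : ℕ) where
  X : Pt n → Type
  [acg : ∀ r, AddCommGroup (X r)]
  [mod : ∀ r, Module k (X r)]
  [fd : ∀ r, FiniteDimensional k (X r)]
  map : ∀ {r s : Pt n}, r ≤ s → (X r →ₗ[k] X s)
  map_id : ∀ r : Pt n, map (le_refl r) = LinearMap.id
  map_comp : ∀ {r s t : Pt n} (h₁ : r ≤ s) (h₂ : s ≤ t),
    (map h₂).comp (map h₁) = map (h₁.trans h₂)

attribute [instance] PersMod.acg PersMod.mod PersMod.fd

variable {k : Type} [Field k] {n : ℕ}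

/-- A morphism of persistence modules: a natural transformation. -/
structure PersHom (M N : PersMod k n) where
  app : ∀ r, M.X r →ₗ[k] N.X r
  natural : ∀ {r s : Pt n} (h : r ≤ s),
    (N.map h).comp (app r) = (app s).comp (M.map h)

def shiftPt (ε : ℝ) (r : Pt n) : Pt n := fun i => r i + ε

lemma shiftPt_mono {ε : ℝ} {r s : Pt n} (h : r ≤ s) : shiftPt ε r ≤ shiftPt ε s :=
  fun i => add_le_add (h i) le_rfl

lemma le_shiftPt {ε : ℝ} (hε : 0 ≤ ε) (r : Pt n) : r ≤ shiftPt ε r :=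
  fun i => le_add_of_nonneg_right hε

/-- The `ε`-shift of a persistence module. -/
def PersMod.shift (M : PersMod k n) (ε : ℝ) : PersMod k n where
  X r := M.X (shiftPt ε r)
  map h := M.map (shiftPt_mono h)
  map_id r := M.map_id _
  map_comp h₁ h₂ := M.map_comp _ _

/-- `M` and `N` are `ε`-interleaved. -/
def Interleaved (ε : ℝ) (M N : PersMod k n) : Prop :=
  ∃ hε : 0 ≤ ε,
  ∃ (f : PersHom M (N.shift ε)) (g : PersHom N (M.shift ε)),
    (∀ r : Pt n, (g.app (shiftPt ε r)).comp (f.app r)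
        = M.map ((le_shiftPt hε r).trans (le_shiftPt hε _))) ∧
    (∀ r : Pt n, (f.app (shiftPt ε r)).comp (g.app r)
        = N.map ((le_shiftPt hε r).trans (le_shiftPt hε _)))

/-- The interleaving distance. -/
def interleavingDist (M N : PersMod k n) : ℝ≥0∞ :=
  sInf { e : ℝ≥0∞ | ∃ ε : ℝ, e = ENNReal.ofReal ε ∧ Interleaved ε M N }

/-- The free persistence module `⊕_i F_{L i}`, where `F_j` is the "upset" interval module
generated at `j`. -/
def freeModFin {m : ℕ} (L : Fin m → Pt n) : PersMod k n where
  X r := {i : Fin m // L i ≤ r} → k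
  map {r s} h :=
    { toFun := fun f i => if h' : L i.1 ≤ r then f ⟨i.1, h'⟩ else 0
      map_add' := by
        intro f g; funext i
        by_cases h' : L i.1 ≤ r <;> simp [h']
      map_smul' := by
        intro c f; funext i
        by_cases h' : L i.1 ≤ r <;> simp [h'] }
  map_id r := by
    apply LinearMap.ext; intro f; funext i
    show (if h' : L i.1 ≤ r then f ⟨i.1, h'⟩ else 0) = f i
    rw [dif_pos i.2]
  map_comp {r s t} h₁ h₂ := by
    apply LinearMap.ext; intro f; funext i
    show (if hs : L i.1 ≤ s then
            (if hr : L i.1 ≤ r then f ⟨i.1, hr⟩ else 0) else 0)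
        = (if hr : L i.1 ≤ r then f ⟨i.1, hr⟩ else 0)
    by_cases hr : L i.1 ≤ r
    · simp [hr, hr.trans h₁]
    · simp [hr]

/-- Isomorphism of persistence modules. -/
def PersIso (M N : PersMod k n) : Prop :=
  ∃ (f : PersHom M N) (g : PersHom N M),
    (∀ r, (g.app r).comp (f.app r) = LinearMap.id) ∧
    (∀ r, (f.app r).comp (g.app r) = LinearMap.id)

/-- `P` is free of finite rank with barcode `B`. -/
def IsFreeWith (P : PersMod k n) (B : Multiset (Pt n)) : Prop :=
  ∃ (m : ℕ) (L : Fin m → Pt n), B = (List.ofFn L : Multiset (Pt n)) ∧ PersIso P (freeModFin L)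

/-- `M` is finitely presentable: it is (isomorphic to) the cokernel of a morphism
between free modules of finite rank. -/
def FinitelyPresentable (M : PersMod k n) : Prop :=
  ∃ (c r : ℕ) (Lc : Fin c → Pt n) (Lr : Fin r → Pt n)
    (f : PersHom (freeModFin Lc) (freeModFin Lr)) (g : PersHom (freeModFin Lr) M),
    (∀ x, Function.Surjective (g.app x)) ∧
    (∀ x, LinearMap.range (f.app x) = LinearMap.ker (g.app x))

/-- A resolution of `M` of length `len`:
an exact sequence `0 → P_len → ⋯ → P_0 → M → 0` (encoded with `P j = 0` for `j > len`). -/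
structure Res (M : PersMod k n) where
  len : ℕ
  P : ℕ → PersMod k n
  d : ∀ j : ℕ, PersHom (P (j + 1)) (P j)
  aug : PersHom (P 0) M
  aug_surj : ∀ r, Function.Surjective (aug.app r)
  exact_zero : ∀ r, LinearMap.range ((d 0).app r) = LinearMap.ker (aug.app r)
  exact_succ : ∀ (j : ℕ) (r), LinearMap.range ((d (j + 1)).app r) = LinearMap.ker ((d j).app r)
  vanish : ∀ j, len < j → ∀ r, ∀ x : (P j).X r, x = 0

/-- Projectivity in the category of persistence modules
(where epimorphisms are the pointwise surjections). -/
def IsProjectiveMod (P : PersMod k n) : Prop :=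
  ∀ (A B : PersMod k n) (e : PersHom A B), (∀ r, Function.Surjective (e.app r)) →
    ∀ f : PersHom P B, ∃ g : PersHom P A, ∀ r, (e.app r).comp (g.app r) = f.app r

/-- An `ε`-bijection between two multisets of points of `R^n`. -/
def IsMatching (ε : ℝ) (B C : Multiset (Pt n)) : Prop :=
  ∃ m : Multiset (Pt n × Pt n),
    m.map Prod.fst = B ∧ m.map Prod.snd = C ∧ ∀ p ∈ m, dist p.1 p.2 ≤ ε

/-- The bottleneck distance between barcodes. -/
def bottleneckDist (B C : Multiset (Pt n)) : ℝ≥0∞ :=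
  sInf { e : ℝ≥0∞ | ∃ ε : ℝ, 0 ≤ ε ∧ e = ENNReal.ofReal ε ∧ IsMatching ε B C }

/-- A signed barcode: a pair (positive part, negative part) of barcodes. -/
abbrev SignedBarcode (n : ℕ) := Multiset (Pt n) × Multiset (Pt n)

/-- The bottleneck dissimilarity on signed barcodes. -/
def dBhat (B C : SignedBarcode n) : ℝ≥0∞ :=
  bottleneckDist (B.1 + C.2) (C.1 + B.2)

/-- Binary direct sum of persistence modules. -/
def PersMod.dsum (M N : PersMod k n) : PersMod k n where
  X r := M.X r × N.X r
  map h := (M.map h).prodMap (N.map h)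
  map_id r := by
    apply LinearMap.ext; intro x
    show (M.map (le_refl r) x.1, N.map (le_refl r) x.2) = x
    rw [M.map_id, N.map_id]; rfl
  map_comp {r s t} h₁ h₂ := by
    apply LinearMap.ext; intro x
    show (M.map h₂ (M.map h₁ x.1), N.map h₂ (N.map h₁ x.2))
        = (M.map (h₁.trans h₂) x.1, N.map (h₁.trans h₂) x.2)
    rw [← M.map_comp h₁ h₂, ← N.map_comp h₁ h₂]; rfl

/-- Finite direct sum of persistence modules. -/
def dsumFin {m : ℕ} (P : Fin m → PersMod k n) : PersMod k n where
  X r := ∀ j, (P j).X r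
  map h := LinearMap.pi fun j => ((P j).map h).comp (LinearMap.proj j)
  map_id r := by
    apply LinearMap.ext; intro x; funext j
    show (P j).map (le_refl r) (x j) = x j
    rw [(P j).map_id]; rfl
  map_comp {r s t} h₁ h₂ := by
    apply LinearMap.ext; intro x; funext j
    show (P j).map h₂ ((P j).map h₁ (x j)) = (P j).map (h₁.trans h₂) (x j)
    rw [← (P j).map_comp h₁ h₂]; rfl

/-- The zero persistence module. -/
def zeroMod : PersMod k n := freeModFin (fun i : Fin 0 => i.elim0)

/-- The Hilbert function of a persistence module. -/
def Hil (M : PersMod k n) (r : Pt n) : ℕ := Module.finrank k (M.X r)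

/-- Number of points of `B` (with multiplicity) that are `≤ r`. -/
def countLe (B : Multiset (Pt n)) (r : Pt n) : ℕ := Multiset.card (B.filter (fun i => i ≤ r))

/-- `R` is a free resolution of `M` with barcodes `B j`. -/
def IsFreeRes {M : PersMod k n} (R : Res M) (B : ℕ → Multiset (Pt n)) : Prop :=
  ∀ j, IsFreeWith (R.P j) (B j)

/-- `R` is a minimal free resolution of `M` with barcodes `B j`: in every homological degree
its term has minimal rank among all free resolutions of `M`. -/
def IsMinFreeRes {M : PersMod k n} (R : Res M) (B : ℕ → Multiset (Pt n)) : Prop :=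
  IsFreeRes R B ∧
  ∀ (R' : Res M) (B' : ℕ → Multiset (Pt n)), IsFreeRes R' B' →
    ∀ j, Multiset.card (B j) ≤ Multiset.card (B' j)

/-- Multiset union of the `B j` over even `j ≤ ℓ`. -/
def evenPart (B : ℕ → Multiset (Pt n)) (ℓ : ℕ) : Multiset (Pt n) :=
  ∑ j ∈ Finset.range (ℓ + 1), if Even j then B j else 0

/-- Multiset union of the `B j` over odd `j ≤ ℓ`. -/
def oddPart (B : ℕ → Multiset (Pt n)) (ℓ : ℕ) : Multiset (Pt n) :=
  ∑ j ∈ Finset.range (ℓ + 1), if ¬ Even j then B j else 0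

/-- `S` is the Betti signed barcode of `M`: the pair (even Betti numbers, odd Betti numbers)
coming from a minimal free resolution of `M`. -/
def IsBettiOf (M : PersMod k n) (S : SignedBarcode n) : Prop :=
  ∃ (R : Res M) (B : ℕ → Multiset (Pt n)), IsMinFreeRes R B ∧
    S = (evenPart B R.len, oddPart B R.len)

/-- `(P, Q)` (with barcodes `BP`, `BQ`) is a minimal Hilbert decomposition of `η`. -/
def IsMinHilbDecomp (η : Pt n → ℤ) (P Q : PersMod k n) (BP BQ : Multiset (Pt n)) : Prop :=
  IsFreeWith P BP ∧ IsFreeWith Q BQ ∧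
  (∀ r, η r = (Hil P r : ℤ) - (Hil Q r : ℤ)) ∧
  ∀ x : Pt n, ¬ (x ∈ BP ∧ x ∈ BQ)

/-- The `ℓ¹`-distance on `R^n`. -/
def l1dist (x y : Pt n) : ℝ := ∑ i, |x i - y i|

/-- The 1-Wasserstein cost of a matching (encoded as a multiset of pairs). -/
def matchCost (m : Multiset (Pt n × Pt n)) : ℝ := (m.map fun p => l1dist p.1 p.2).sum

/-- The 1-Wasserstein distance between barcodes. -/
def wassDist (B C : Multiset (Pt n)) : ℝ≥0∞ :=
  sInf { e : ℝ≥0∞ | ∃ m : Multiset (Pt n × Pt n),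
    m.map Prod.fst = B ∧ m.map Prod.snd = C ∧ e = ENNReal.ofReal (matchCost m) }

/-- The signed 1-Wasserstein distance on signed barcodes. -/
def dW1hat (B C : SignedBarcode n) : ℝ≥0∞ := wassDist (B.1 + C.2) (C.1 + B.2)

/-- The reduction of a signed barcode: cancel common points with multiplicity. -/
def reduceSB (B : SignedBarcode n) : SignedBarcode n := (B.1 - B.2, B.2 - B.1)

/-!
Both signed distances compare multisets that differ by the common part `D` of the cancelled
points, `(B₊ ∩ B₋) + (C₊ ∩ C₋)`, added to both sides. Adding `D` to both sides of a
Wasserstein problem costs nothing (match `D` to itself), and it cannot help either: by the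
triangle inequality for `ℓ¹`, a matching of `X + D` with `Y + D` can be rerouted around the
points of `D` one at a time without increasing its cost.
-/

lemma l1dist_nonneg (x y : Pt n) : 0 ≤ l1dist x y :=
  Finset.sum_nonneg fun _ _ => abs_nonneg _

lemma l1dist_self (x : Pt n) : l1dist x x = 0 := by
  simp [l1dist]

lemma l1dist_triangle (x y z : Pt n) : l1dist x z ≤ l1dist x y + l1dist y z := by
  rw [l1dist, l1dist, l1dist, ← Finset.sum_add_distrib]
  exact Finset.sum_le_sum fun i _ => abs_sub_le (x i) (y i) (z i)

lemma matchCost_cons (p : Pt n × Pt n) (m : Multiset (Pt n × Pt n)) :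
    matchCost (p ::ₘ m) = l1dist p.1 p.2 + matchCost m := by
  simp [matchCost]

lemma matchCost_add (m m' : Multiset (Pt n × Pt n)) :
    matchCost (m + m') = matchCost m + matchCost m' := by
  simp [matchCost]

lemma matchCost_map_diag (D : Multiset (Pt n)) : matchCost (D.map fun d => (d, d)) = 0 := by
  simp [matchCost, l1dist_self]

lemma wassDist_le_matchCost {X Y : Multiset (Pt n)} {m : Multiset (Pt n × Pt n)}
    (hX : m.map Prod.fst = X) (hY : m.map Prod.snd = Y) :
    wassDist X Y ≤ ENNReal.ofReal (matchCost m) :=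
  sInf_le ⟨m, hX, hY, rfl⟩

lemma le_wassDist {e : ℝ≥0∞} {X Y : Multiset (Pt n)}
    (h : ∀ m : Multiset (Pt n × Pt n), m.map Prod.fst = X → m.map Prod.snd = Y →
      e ≤ ENNReal.ofReal (matchCost m)) :
    e ≤ wassDist X Y :=
  le_sInf fun _ ⟨m, hX, hY, he⟩ => he ▸ h m hX hY

lemma Multiset.exists_eq_cons_of_map_eq_cons {α β : Type*} {f : α → β} {s : Multiset α}
    {b : β} {t : Multiset β} (h : s.map f = b ::ₘ t) :
    ∃ a s', s = a ::ₘ s' ∧ f a = b ∧ s'.map f = t := by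
  obtain ⟨a, ha, hab, hs⟩ := (Multiset.map_eq_cons f s t b).mpr h
  exact ⟨a, s.erase a, (Multiset.cons_erase ha).symm, hab, hs⟩

/-- A pair `(d, d)` is dropped; otherwise the pairs `(x, d)` and `(d, y)` through `d` are
replaced by `(x, y)`. -/
lemma exists_matching_cost_le_of_cons {d : Pt n} {X Y : Multiset (Pt n)}
    {m : Multiset (Pt n × Pt n)} (hX : m.map Prod.fst = d ::ₘ X)
    (hY : m.map Prod.snd = d ::ₘ Y) :
    ∃ m' : Multiset (Pt n × Pt n),
      m'.map Prod.fst = X ∧ m'.map Prod.snd = Y ∧ matchCost m' ≤ matchCost m := by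
  obtain ⟨p, m₀, rfl, hpd, hY₀⟩ := Multiset.exists_eq_cons_of_map_eq_cons hY
  rw [Multiset.map_cons, Multiset.cons_eq_cons] at hX
  rcases hX with ⟨-, hX₀⟩ | ⟨-, X₀, hm₀, rfl⟩
  · refine ⟨m₀, hX₀, hY₀, ?_⟩
    rw [matchCost_cons]
    linarith [l1dist_nonneg p.1 p.2]
  · obtain ⟨q, m₁, rfl, hqd, hX₁⟩ := Multiset.exists_eq_cons_of_map_eq_cons hm₀
    refine ⟨(p.1, q.2) ::ₘ m₁, by simp [hX₁], by simpa using hY₀, ?_⟩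
    have hroute : l1dist p.1 q.2 ≤ l1dist p.1 p.2 + l1dist q.1 q.2 := by
      rw [hpd, hqd]
      exact l1dist_triangle _ _ _
    simp only [matchCost_cons]
    linarith

lemma wassDist_le_wassDist_cons (d : Pt n) (X Y : Multiset (Pt n)) :
    wassDist X Y ≤ wassDist (d ::ₘ X) (d ::ₘ Y) :=
  le_wassDist fun _ hX hY =>
    let ⟨_, hX', hY', hcost⟩ := exists_matching_cost_le_of_cons hX hY
    (wassDist_le_matchCost hX' hY').trans (ENNReal.ofReal_le_ofReal hcost)

lemma wassDist_add_le (X Y D : Multiset (Pt n)) : wassDist (X + D) (Y + D) ≤ wassDist X Y := by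
  refine le_wassDist fun m hX hY => ?_
  have hX' : (m + D.map fun d => (d, d)).map Prod.fst = X + D := by simp [hX]
  have hY' : (m + D.map fun d => (d, d)).map Prod.snd = Y + D := by simp [hY]
  refine (wassDist_le_matchCost hX' hY').trans_eq ?_
  rw [matchCost_add, matchCost_map_diag, add_zero]

lemma wassDist_add_add_right (X Y D : Multiset (Pt n)) :
    wassDist (X + D) (Y + D) = wassDist X Y := by
  refine le_antisymm (wassDist_add_le X Y D) ?_
  induction D using Multiset.induction_on with
  | empty => simp
  | cons d D ih =>
    rw [Multiset.add_cons, Multiset.add_cons]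
    exact ih.trans (wassDist_le_wassDist_cons d _ _)

lemma add_eq_reduceSB_add_inter (B C : SignedBarcode n) :
    B.1 + C.2 = (reduceSB B).1 + (reduceSB C).2 + (B.1 ∩ B.2 + C.1 ∩ C.2) := by
  obtain ⟨B₁, B₂⟩ := B
  obtain ⟨C₁, C₂⟩ := C
  conv_lhs => rw [← Multiset.sub_add_inter B₁ B₂, ← Multiset.sub_add_inter C₂ C₁]
  rw [Multiset.inter_comm C₂ C₁]
  simp only [reduceSB]
  exact add_add_add_comm _ _ _ _

/-- **Proposition 6.2(3).** The signed 1-Wasserstein distance is invariant under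
reduction of signed barcodes. -/
theorem dW1hat_reduce {n : ℕ} (B C : SignedBarcode n) :
    dW1hat B C = dW1hat (reduceSB B) (reduceSB C) := by
  have hC : C.1 + B.2 = (reduceSB C).1 + (reduceSB B).2 + (C.1 ∩ C.2 + B.1 ∩ B.2) :=
    add_eq_reduceSB_add_inter C B
  rw [dW1hat, dW1hat, add_eq_reduceSB_add_inter B C, hC, add_comm (C.1 ∩ C.2),
    wassDist_add_add_right]

end
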